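/- Let n ≥ 2 and let G and G̃ be n×n positive definite complex Hermitian matrices. Then the Hermitian matrix tr(G̃⁻¹G)·G⁻¹ − G̃⁻¹ is positive definite. (This is the pointwise statement that the tensor Θ^{ij̄} = (1/(n−1))((tr_{g̃} g) g^{ij̄} − g̃^{ij̄}) appearing in the paper is a positive definite Hermitian form.) -/

import Mathlib

open Matrix ComplexOrder

/-!
Write `G = B⋆B` with `B` invertible. Congruence by `B` turns `tr(H G)•G⁻¹ - H` into
`tr(A)•1 - A` with `A = B H B⋆` positive definite, and in an eigenbasis of `A` the latter is
diagonal with entries `∑_{j ≠ i} λⱼ`, positive as soon as there are at least two eigenvalues.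
Apply this to `H = G̃⁻¹`.
-/

namespace Matrix

variable {n 𝕜 : Type*} [Fintype n] [DecidableEq n] [RCLike 𝕜]

theorem PosDef.trace_smul_one_sub [Nontrivial n] {A : Matrix n n 𝕜} (hA : A.PosDef) :
    (A.trace • 1 - A).PosDef := by
  have hA' := hA.isHermitian
  have hdiag : A.trace • 1 - A = Unitary.conjStarAlgAut 𝕜 _ hA'.eigenvectorUnitary
      (diagonal fun i ↦ ((∑ j, hA'.eigenvalues j - hA'.eigenvalues i : ℝ) : 𝕜)) := by
    have hD : (diagonal fun i ↦ ((∑ j, hA'.eigenvalues j - hA'.eigenvalues i : ℝ) : 𝕜)) =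
        ((∑ j, hA'.eigenvalues j : ℝ) : 𝕜) • 1 - diagonal (RCLike.ofReal ∘ hA'.eigenvalues) := by
      rw [← diagonal_one, ← diagonal_smul, diagonal_sub]
      simp
    rw [hD, map_sub, map_smul, map_one, ← hA'.spectral_theorem, hA'.trace_eq_sum_eigenvalues]
    simp
  rw [hdiag, Unitary.conjStarAlgAut_apply, Unitary.isUnit_coe.posDef_star_right_conjugate_iff,
    posDef_diagonal_iff]
  intro i
  obtain ⟨j, hji⟩ := exists_ne i
  exact_mod_cast sub_pos.mpr <| Finset.single_lt_sum hji (Finset.mem_univ _) (Finset.mem_univ _)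
    (hA.eigenvalues_pos j) fun k _ _ ↦ (hA.eigenvalues_pos k).le

open scoped MatrixOrder in
theorem PosDef.exists_isUnit_eq_star_mul_self {G : Matrix n n 𝕜} (hG : G.PosDef) :
    ∃ B : Matrix n n 𝕜, IsUnit B ∧ G = star B * B :=
  CStarAlgebra.isStrictlyPositive_iff_eq_star_mul_self.mp hG.isStrictlyPositive

theorem PosDef.trace_mul_smul_inv_sub [Nontrivial n] {G H : Matrix n n 𝕜} (hG : G.PosDef)
    (hH : H.PosDef) : ((H * G).trace • G⁻¹ - H).PosDef := by
  obtain ⟨B, hB, rfl⟩ := hG.exists_isUnit_eq_star_mul_self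
  have hBHB : (B * H * star B).PosDef := hB.posDef_star_right_conjugate_iff.mpr hH
  have hinv : B * (star B * B)⁻¹ * star B = 1 := by
    rw [mul_inv_rev, mul_assoc, mul_assoc, nonsing_inv_mul _ ((isUnit_iff_isUnit_det _).mp hB.star),
      mul_one, mul_nonsing_inv _ ((isUnit_iff_isUnit_det _).mp hB)]
  rw [← hB.posDef_star_right_conjugate_iff]
  convert hBHB.trace_smul_one_sub using 1
  rw [mul_sub, sub_mul, Matrix.mul_smul, Matrix.smul_mul, hinv, ← mul_assoc, trace_mul_cycle]

end Matrix

/-- The tensor `Θ^{ij̄} = (1/(n−1))((tr_{g̃} g) g^{ij̄} − g̃^{ij̄})` is positive definite: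
if `G` and `G̃` are positive definite Hermitian matrices (with `n ≥ 2`), then
`tr(G̃⁻¹G)·G⁻¹ − G̃⁻¹` is positive definite. -/
theorem trace_smul_inv_sub_inv_posDef {n : ℕ} (hn : 2 ≤ n)
    (G Gt : Matrix (Fin n) (Fin n) ℂ)
    (hG : G.PosDef) (hGt : Gt.PosDef) :
    ((Gt⁻¹ * G).trace • G⁻¹ - Gt⁻¹).PosDef :=
  have : Nontrivial (Fin n) := Fin.nontrivial_iff_two_le.mpr hn
  hG.trace_mul_smul_inv_sub hGt.inv
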